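/- With k, K, R, ι, M and the Sugiyama–Yasuda symbol SY as in the context: for all f, g ∈ R, one has SY(f, g) = 0 in Ω_{K/k} if and only if there exist α, β, γ, δ ∈ k(K⁴) with αδ + βγ ≠ 0 and g = (αf + β)/(γf + δ); that is, the symbol vanishes exactly when f and g lie in the same orbit under Γ = PGL₂(k^{1/4}·K). -/

import Mathlib

open IntermediateField

/-- The subfield `k(K²)` of `K` generated by (the image of) `k` and all squares. -/
def kSq (k K : Type*) [Field k] [Field K] [Algebra k K] : IntermediateField k K :=
  IntermediateField.adjoin k {x : K | ∃ y : K, x = y ^ 2}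

/-- The subfield `k(K⁴)` of `K` generated by (the image of) `k` and all fourth
powers. -/
def kFour (k K : Type*) [Field k] [Field K] [Algebra k K] : IntermediateField k K :=
  IntermediateField.adjoin k {x : K | ∃ y : K, x = y ^ 4}

/-- `SYWitness k K ι f g s` records that `s ∈ K` computes the Sugiyama–Yasuda symbol
`SY(f, g) = s • dg`: writing (inside a perfect closure `L` of `K`, via the embedding
`ι : K → L`) `f = f₀⁴ + f₁⁴ g + f₂⁴ g² + f₃⁴ g³` with `f₀, f₁, f₂, f₃` in the subfield
`M = k^{1/4}·K = {x : L | x⁴ ∈ ι(k(K⁴))}`, one has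
`s = ((f₁f₃ + f₂²)/(f₁² + f₃² g))²`.  (The decomposition, and hence `s`, exists and is
unique; here it is recorded as a predicate.) -/
def SYWitness (k K L : Type*) [Field k] [Field K] [Algebra k K] [Field L]
    (ι : K →+* L) (f g s : K) : Prop :=
  ∃ f0 f1 f2 f3 : L,
    f0 ^ 4 ∈ ι '' (kFour k K : Set K) ∧ f1 ^ 4 ∈ ι '' (kFour k K : Set K) ∧
    f2 ^ 4 ∈ ι '' (kFour k K : Set K) ∧ f3 ^ 4 ∈ ι '' (kFour k K : Set K) ∧
    ι f = f0 ^ 4 + f1 ^ 4 * ι g + f2 ^ 4 * (ι g) ^ 2 + f3 ^ 4 * (ι g) ^ 3 ∧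
    f1 ^ 2 + f3 ^ 2 * ι g ≠ 0 ∧
    ι s = ((f1 * f3 + f2 ^ 2) / (f1 ^ 2 + f3 ^ 2 * ι g)) ^ 2

/-!
Write `f = b₀ + b₁ g + b₂ g² + b₃ g³` with `bᵢ = fᵢ⁴ ∈ k(K⁴)`. Since `[K : k(K²)] = 2` and
`g² ∈ k(K²)`, there is a `k`-derivation `D` with `D g = 1`, so `s • dg = 0` iff `s = 0`, which
unwinds in `L` to `b₂² = b₁ b₃`.

In characteristic `2` the relation `g (γ f + δ) = α f + β` expands to a cubic relation in `g`
with coefficients in `k(K⁴)`: it says `γ b₁ = α b₂`, `γ b₂ = α b₃`, and determines `β`, `δ`.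
A nonzero such `(α, γ)` exists exactly when `b₂² = b₁ b₃`. The cubic relation is forced to be
trivial because `g` has degree `4` over `k(K⁴)`: its minimal polynomial is `X ^ 2 ^ j - a`, and
`j ≤ 1` would put `g` in `k(K²)` or make `k(K²) = k(K⁴)`. The latter fails for a function field
in one variable: it would give `k(K²) = k(K^{2^n})` for every `n`, whereas for `x`
transcendental with `[K : k(x)] = N` every element of `k(K^{2^{N+1}})` has degree at most `N`
over `k(x^{2^{N+1}})`, while `x²` has degree `2^N`.
-/

open Polynomial Module

section

variable {k K : Type*} [Field k] [Field K] [Algebra k K]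

variable (k K) in
def kPow (n : ℕ) : IntermediateField k K :=
  adjoin k {x : K | ∃ y : K, x = y ^ 2 ^ n}

lemma pow_mem_kPow (y : K) (n : ℕ) : y ^ 2 ^ n ∈ kPow k K n :=
  subset_adjoin _ _ ⟨y, rfl⟩

lemma kPow_one : kPow k K 1 = kSq k K := by
  simp only [kPow, kSq, pow_one]

lemma kPow_two : kPow k K 2 = kFour k K :=
  rfl

lemma sq_mem_kSq (y : K) : y ^ 2 ∈ kSq k K :=
  subset_adjoin _ _ ⟨y, rfl⟩

lemma pow_four_mem_kFour (y : K) : y ^ 4 ∈ kFour k K :=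
  subset_adjoin _ _ ⟨y, rfl⟩

lemma kFour_le_kSq : kFour k K ≤ kSq k K := by
  rw [kFour, adjoin_le_iff]
  rintro _ ⟨y, rfl⟩
  rw [SetLike.mem_coe, show y ^ 4 = (y ^ 2) ^ 2 by ring]
  exact sq_mem_kSq _

section CharTwo

variable [CharP K 2]

def IntermediateField.powPreimage (E : IntermediateField k K) (n : ℕ) : IntermediateField k K :=
  (E.toSubfield.comap (iterateFrobenius K 2 n)).toIntermediateField fun c => by
    simp [iterateFrobenius_def, ← map_pow]

@[simp]
lemma IntermediateField.mem_powPreimage {E : IntermediateField k K} {n : ℕ} {a : K} :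
    a ∈ E.powPreimage n ↔ a ^ 2 ^ n ∈ E := by
  change a ∈ E.toSubfield.comap _ ↔ _
  rw [Subfield.mem_comap, iterateFrobenius_def]
  rfl

lemma pow_mem_kPow_add {m : ℕ} {a : K} (ha : a ∈ kPow k K m) (n : ℕ) :
    a ^ 2 ^ n ∈ kPow k K (m + n) := by
  suffices kPow k K m ≤ (kPow k K (m + n)).powPreimage n from mem_powPreimage.mp (this ha)
  rw [kPow, adjoin_le_iff]
  rintro _ ⟨y, rfl⟩
  simpa [← pow_mul, ← pow_add] using pow_mem_kPow (k := k) y (m + n)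

lemma sq_mem_kFour_of_mem_kSq {a : K} (ha : a ∈ kSq k K) : a ^ 2 ∈ kFour k K := by
  rw [← kPow_one] at ha
  simpa [← kPow_two] using pow_mem_kPow_add ha 1

lemma kSq_le_kPow_of_kSq_le_kFour (h : kSq k K ≤ kFour k K) (n : ℕ) :
    kSq k K ≤ kPow k K (n + 1) := by
  induction n with
  | zero => exact kPow_one.ge
  | succ n ih =>
    refine ih.trans ?_
    rw [kPow, adjoin_le_iff]
    rintro _ ⟨y, rfl⟩
    have hy : y ^ 2 ∈ kPow k K 2 := by rw [kPow_two]; exact h (sq_mem_kSq y)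
    rw [SetLike.mem_coe, show n + 1 + 1 = 2 + n by omega, pow_succ', pow_mul]
    exact pow_mem_kPow_add hy n

end CharTwo

section DegreeTwo

variable {F : IntermediateField k K} {g : K}

lemma linearIndependent_one_of_notMem (hg : g ∉ F) : LinearIndependent F ![(1 : K), g] := by
  refine LinearIndependent.pair_iff.mpr fun a b hab => ?_
  simp only [smul_def, smul_eq_mul, mul_one] at hab
  by_cases hb : b = 0
  · subst hb
    simpa using hab
  · refine absurd ?_ hg
    have hg' : g = -(a : K) / b := by
      rw [eq_div_iff (by exact_mod_cast hb)]
      linear_combination hab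
    exact hg' ▸ div_mem (neg_mem a.2) b.2

variable (hF : finrank F K = 2) (hg : g ∉ F)
include hF hg

noncomputable def IntermediateField.basisOneGen : Basis (Fin 2) F K :=
  basisOfLinearIndependentOfCardEqFinrank (linearIndependent_one_of_notMem hg) (by simp [hF])

lemma IntermediateField.coe_basisOneGen : ⇑(basisOneGen hF hg) = ![1, g] :=
  coe_basisOfLinearIndependentOfCardEqFinrank _ _

lemma IntermediateField.exists_eq_add_mul (y : K) : ∃ a b : F, y = a + b * g := by
  refine ⟨(basisOneGen hF hg).repr y 0, (basisOneGen hF hg).repr y 1, ?_⟩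
  conv_lhs => rw [← (basisOneGen hF hg).sum_repr y]
  simp [coe_basisOneGen, smul_def]

lemma IntermediateField.basisOneGen_coord_one (a b : F) :
    (basisOneGen hF hg).coord 1 (a + b * g) = b := by
  have : (a : K) + b * g = a • basisOneGen hF hg 0 + b • basisOneGen hF hg 1 := by
    simp [coe_basisOneGen, smul_def]
  simp [this]

lemma exists_derivation_apply_eq_one [CharP K 2] (hg2 : g ^ 2 ∈ F) :
    ∃ D : Derivation k K K, D g = 1 := by
  let d : K →ₗ[k] K := F.val.toLinearMap.comp (((basisOneGen hF hg).coord 1).restrictScalars k)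
  have hd (a b : F) : d (a + b * g) = b := congrArg Subtype.val (basisOneGen_coord_one hF hg a b)
  refine ⟨⟨d, ?_, fun y z => ?_⟩, ?_⟩
  · simpa using hd 1 0
  · obtain ⟨a, b, rfl⟩ := exists_eq_add_mul hF hg y
    obtain ⟨c, e, rfl⟩ := exists_eq_add_mul hF hg z
    have hyz : ((a : K) + b * g) * (c + e * g) =
        ↑(a * c + b * e * ⟨g ^ 2, hg2⟩) + ↑(a * e + b * c) * g := by
      push_cast; ring
    simp only [hyz, hd, smul_eq_mul]
    push_cast
    linear_combination (-(b : K) * e * g) * (CharTwo.two_eq_zero : (2 : K) = 0)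
  · simpa using hd 0 1

end DegreeTwo

lemma smul_D_eq_zero_iff [CharP K 2] {F : IntermediateField k K} {g : K} (hF : finrank F K = 2)
    (hg : g ∉ F) (hg2 : g ^ 2 ∈ F) {s : K} :
    s • KaehlerDifferential.D k K g = 0 ↔ s = 0 := by
  refine ⟨fun h => ?_, fun h => by rw [h, zero_smul]⟩
  obtain ⟨D, hD⟩ := exists_derivation_apply_eq_one hF hg hg2
  simpa [hD] using congrArg D.liftKaehlerDifferential h

lemma kSq_le_kFour_of_sq_mem [CharP K 2] {g : K} (hdeg : finrank (kSq k K) K = 2)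
    (hg : g ∉ kSq k K) (hg2 : g ^ 2 ∈ kFour k K) : kSq k K ≤ kFour k K := by
  rw [kSq, adjoin_le_iff]
  rintro _ ⟨y, rfl⟩
  obtain ⟨a, b, rfl⟩ := exists_eq_add_mul hdeg hg y
  have hsq : ((a : K) + b * g) ^ 2 = a ^ 2 + b ^ 2 * g ^ 2 := by
    linear_combination (a * b * g : K) * (CharTwo.two_eq_zero : (2 : K) = 0)
  rw [SetLike.mem_coe, hsq]
  exact add_mem (sq_mem_kFour_of_mem_kSq a.2) (mul_mem (sq_mem_kFour_of_mem_kSq b.2) hg2)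

lemma two_pow_le_natDegree_minpoly [CharP K 2] {F : IntermediateField k K} {x : K} {n : ℕ}
    (hx : x ^ 2 ^ n ∈ F) (hlt : ∀ j < n, x ^ 2 ^ j ∉ F) : 2 ^ n ≤ (minpoly F x).natDegree := by
  have hsep : (minpoly F x).natSepDegree = 1 :=
    (minpoly.natSepDegree_eq_one_iff_pow_mem 2).mpr ⟨n, ⟨_, hx⟩, rfl⟩
  obtain ⟨j, a, hmin⟩ := (minpoly.natSepDegree_eq_one_iff_eq_X_pow_sub_C 2).mp hsep
  have hxj : x ^ 2 ^ j = a := by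
    simpa [hmin, sub_eq_zero] using minpoly.aeval F x
  rw [hmin, natDegree_X_pow_sub_C]
  refine Nat.pow_le_pow_right two_pos (not_lt.mp fun hj => hlt j hj ?_)
  exact hxj ▸ a.2

lemma notMem_adjoin_sq_of_transcendental {z : K} (hz : Transcendental k z) : z ∉ k⟮z ^ 2⟯ := by
  intro hmem
  obtain ⟨P, Q, hPQ⟩ := (mem_adjoin_simple_iff k z).mp hmem
  have hQ : aeval (z ^ 2) Q ≠ 0 := fun h => hz (by rw [hPQ, h, div_zero]; exact isAlgebraic_zero)
  have hpoly : X * expand k 2 Q = expand k 2 P := by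
    rw [← sub_eq_zero]
    refine transcendental_iff.mp hz _ ?_
    rw [eq_div_iff hQ] at hPQ
    simp [expand_aeval, hPQ]
  have hQ0 : expand k 2 Q ≠ 0 := (expand_ne_zero two_pos).mpr fun h => hQ (by simp [h])
  -- the two sides have degrees of different parity
  have := congrArg natDegree hpoly
  rw [natDegree_X_mul hQ0, natDegree_expand, natDegree_expand] at this
  omega

lemma two_pow_le_natDegree_minpoly_adjoin_pow [CharP K 2] {y : K} (hy : Transcendental k y)
    (n : ℕ) : 2 ^ n ≤ (minpoly k⟮y ^ 2 ^ n⟯ y).natDegree := by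
  refine two_pow_le_natDegree_minpoly (mem_adjoin_simple_self k _) fun j hj hmem => ?_
  refine notMem_adjoin_sq_of_transcendental (hy.pow (pow_pos two_pos j)) ?_
  refine adjoin_simple_le_iff.mpr ?_ hmem
  obtain ⟨i, rfl⟩ := Nat.exists_eq_add_of_lt hj
  rw [show y ^ 2 ^ (j + i + 1) = ((y ^ 2 ^ j) ^ 2) ^ 2 ^ i by ring]
  exact pow_mem (mem_adjoin_simple_self k _) _

section Frobenius

variable [CharP K 2] {F E : IntermediateField k K} {n : ℕ}

lemma pow_mem_span_pow_basis {ι : Type*} [Fintype ι] (b : Basis ι F K)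
    (hFE : ∀ c ∈ F, c ^ 2 ^ n ∈ E) (y : K) :
    y ^ 2 ^ n ∈ Submodule.span E (Set.range fun i => b i ^ 2 ^ n) := by
  rw [← b.sum_repr y, sum_pow_char_pow]
  refine Submodule.sum_mem _ fun i _ => ?_
  rw [smul_def, smul_eq_mul, mul_pow]
  exact Submodule.smul_of_tower_mem _ (⟨_, hFE _ (b.repr y i).2⟩ : E)
    (Submodule.subset_span ⟨i, rfl⟩)

/-- The elements `y ^ 2 ^ n` span, over `E`, a finite-dimensional algebra, hence a field, which
therefore contains `k(K^{2^n})`. -/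
lemma natDegree_minpoly_le_of_mem_kPow [FiniteDimensional F K] (hFE : ∀ c ∈ F, c ^ 2 ^ n ∈ E)
    {y : K} (hy : y ∈ kPow k K n) : (minpoly E y).natDegree ≤ finrank F K := by
  let b := Module.finBasis F K
  let T : Submodule E K := Submodule.span E (Set.range fun i => b i ^ 2 ^ n)
  let A := Algebra.adjoin E (MonoidHom.mrange (powMonoidHom (2 ^ n) : K →* K) : Set K)
  have hAT : Subalgebra.toSubmodule A ≤ T := by
    rw [Algebra.adjoin_eq_span, Submonoid.closure_eq, Submodule.span_le]
    rintro _ ⟨z, rfl⟩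
    exact pow_mem_span_pow_basis b hFE z
  have : FiniteDimensional E T := FiniteDimensional.span_of_finite E (Set.finite_range _)
  have : FiniteDimensional E A := Submodule.finiteDimensional_of_le hAT
  let V := A.toIntermediateField fun x hx => A.inv_mem_of_algebraic (x := ⟨x, hx⟩)
    ((Algebra.IsIntegral.isIntegral (R := E) (⟨x, hx⟩ : A)).map A.val).isAlgebraic
  have : FiniteDimensional E V := inferInstanceAs (FiniteDimensional E A)
  have : Module.Free E V := .of_divisionRing E V
  have hkV : kPow k K n ≤ V.restrictScalars k := by
    rw [kPow, adjoin_le_iff]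
    rintro _ ⟨z, rfl⟩
    exact Algebra.subset_adjoin ⟨z, rfl⟩
  calc (minpoly E y).natDegree = (minpoly E (⟨y, hkV hy⟩ : V)).natDegree := by
        rw [minpoly_eq]
    _ ≤ finrank E V := minpoly.natDegree_le _
    _ = finrank E (Subalgebra.toSubmodule A) := rfl
    _ ≤ finrank E T := Submodule.finrank_mono hAT
    _ ≤ finrank F K := (finrank_range_le_card _).trans (by simp)

end Frobenius

lemma not_kSq_le_kFour [CharP K 2] (hfg : (⊤ : IntermediateField k K).FG)
    (htr : ∃ x : K, Transcendental k x ∧ Algebra.IsAlgebraic k⟮x⟯ K) :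
    ¬ kSq k K ≤ kFour k K := by
  intro h
  obtain ⟨x, hx, halg⟩ := htr
  have : Algebra.EssFiniteType k K := fg_top_iff.mp hfg
  have : Algebra.EssFiniteType k⟮x⟯ K := .of_comp k _ K
  have : FiniteDimensional k⟮x⟯ K := Algebra.finite_of_essFiniteType_of_isAlgebraic
  set N := finrank k⟮x⟯ K
  have hxE (c : K) (hc : c ∈ k⟮x⟯) : c ^ 2 ^ (N + 1) ∈ k⟮(x ^ 2) ^ 2 ^ N⟯ := by
    refine mem_powPreimage.mp (adjoin_simple_le_iff.mpr ?_ hc)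
    rw [mem_powPreimage, show x ^ 2 ^ (N + 1) = (x ^ 2) ^ 2 ^ N by ring]
    exact mem_adjoin_simple_self k _
  have : 2 ^ N ≤ N := calc
    2 ^ N ≤ (minpoly k⟮(x ^ 2) ^ 2 ^ N⟯ (x ^ 2)).natDegree :=
      two_pow_le_natDegree_minpoly_adjoin_pow (hx.pow two_pos) N
    _ ≤ N := natDegree_minpoly_le_of_mem_kPow hxE (kSq_le_kPow_of_kSq_le_kFour h N (sq_mem_kSq x))
  exact Nat.lt_two_pow_self.not_ge this

lemma four_le_natDegree_minpoly_kFour [CharP K 2] (hfg : (⊤ : IntermediateField k K).FG)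
    (htr : ∃ x : K, Transcendental k x ∧ Algebra.IsAlgebraic k⟮x⟯ K)
    (hdeg : finrank (kSq k K) K = 2) {g : K} (hg : g ∉ kSq k K) :
    4 ≤ (minpoly (kFour k K) g).natDegree := by
  refine two_pow_le_natDegree_minpoly (n := 2) (pow_four_mem_kFour g) fun j hj hmem => ?_
  interval_cases j
  · exact hg (kFour_le_kSq (by simpa using hmem))
  · exact not_kSq_le_kFour hfg htr (kSq_le_kFour_of_sq_mem hdeg hg (by simpa using hmem))

lemma eq_zero_of_cubic_eq_zero {F : IntermediateField k K} {g : K}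
    (hg : 4 ≤ (minpoly F g).natDegree) {c₀ c₁ c₂ c₃ : K} (h₀ : c₀ ∈ F) (h₁ : c₁ ∈ F)
    (h₂ : c₂ ∈ F) (h₃ : c₃ ∈ F) (h : c₀ + c₁ * g + c₂ * g ^ 2 + c₃ * g ^ 3 = 0) :
    c₀ = 0 ∧ c₁ = 0 ∧ c₂ = 0 ∧ c₃ = 0 := by
  let p : F[X] := C ⟨c₀, h₀⟩ + C ⟨c₁, h₁⟩ * X + C ⟨c₂, h₂⟩ * X ^ 2 + C ⟨c₃, h₃⟩ * X ^ 3
  have hp : p = 0 := by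
    by_contra hp
    have hle := minpoly.degree_le_of_ne_zero F g hp (by simpa [p] using h)
    have hp3 : p.degree ≤ (3 : ℕ) := by simp only [p]; compute_degree!
    have := natDegree_le_iff_degree_le.mpr (hle.trans hp3)
    omega
  have hc (i : ℕ) : ((p.coeff i : F) : K) = 0 := by simp [hp]
  refine ⟨?_, ?_, ?_, ?_⟩
  · simpa [p] using hc 0
  · simpa [p] using hc 1
  · simpa [p] using hc 2
  · simpa [p] using hc 3

lemma SYWitness.exists_coeffs [CharP K 2] {L : Type*} [Field L] {ι : K →+* L} {f g s : K}
    (hs : SYWitness k K L ι f g s) :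
    ∃ b₀ b₁ b₂ b₃ : K, b₀ ∈ kFour k K ∧ b₁ ∈ kFour k K ∧ b₂ ∈ kFour k K ∧ b₃ ∈ kFour k K ∧
      f = b₀ + b₁ * g + b₂ * g ^ 2 + b₃ * g ^ 3 ∧ b₁ + b₃ * g ^ 2 ≠ 0 ∧
      (s = 0 ↔ b₂ ^ 2 = b₁ * b₃) := by
  obtain ⟨f₀, f₁, f₂, f₃, ⟨b₀, hb₀, h₀⟩, ⟨b₁, hb₁, h₁⟩, ⟨b₂, hb₂, h₂⟩, ⟨b₃, hb₃, h₃⟩, hf, hden,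
    hs⟩ := hs
  have : CharP L 2 := charP_of_injective_ringHom ι.injective 2
  refine ⟨b₀, b₁, b₂, b₃, hb₀, hb₁, hb₂, hb₃, ι.injective ?_, fun h => hden ?_, ?_⟩
  · simp [h₀, h₁, h₂, h₃, hf]
  · have hsq : ι (b₁ + b₃ * g ^ 2) = (f₁ ^ 2 + f₃ ^ 2 * ι g) ^ 2 := by
      simp only [map_add, map_mul, map_pow, h₁, h₃, CharTwo.add_sq]
      ring
    rw [h, map_zero] at hsq
    exact pow_eq_zero_iff two_ne_zero |>.mp hsq.symm
  · have hN : ι (b₂ ^ 2 + b₁ * b₃) = (f₁ * f₃ + f₂ ^ 2) ^ 2 ^ 2 := by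
      simp only [map_add, map_mul, map_pow, h₁, h₂, h₃, add_pow_char_pow]
      ring
    calc s = 0 ↔ ι s = 0 := (map_eq_zero_iff ι ι.injective).symm
      _ ↔ ι (b₂ ^ 2 + b₁ * b₃) = 0 := by rw [hs, hN]; simp [hden]
      _ ↔ b₂ ^ 2 = b₁ * b₃ := by rw [map_eq_zero_iff ι ι.injective, CharTwo.add_eq_zero]

section Moebius

variable [CharP K 2] {f g b₀ b₁ b₂ b₃ α β γ δ : K}

lemma mul_moebius_denom_eq (hf : f = b₀ + b₁ * g + b₂ * g ^ 2 + b₃ * g ^ 3)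
    (h₂ : γ * b₁ = α * b₂) (h₃ : γ * b₂ = α * b₃) :
    g * (γ * f + (γ * b₀ + α * b₁)) = α * f + (α * b₀ + γ * b₃ * g ^ 4) := by
  linear_combination (g * γ - α) * hf + g ^ 2 * h₂ + g ^ 3 * h₃ +
    (γ * b₀ * g - α * b₀) * (CharTwo.two_eq_zero : (2 : K) = 0)

variable {F : IntermediateField k K}

lemma moebius_coeffs_of_mul_denom_eq (hg4 : g ^ 4 ∈ F) (hdeg : 4 ≤ (minpoly F g).natDegree)
    (hb₀ : b₀ ∈ F) (hb₁ : b₁ ∈ F) (hb₂ : b₂ ∈ F) (hb₃ : b₃ ∈ F)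
    (hα : α ∈ F) (hβ : β ∈ F) (hγ : γ ∈ F) (hδ : δ ∈ F)
    (hf : f = b₀ + b₁ * g + b₂ * g ^ 2 + b₃ * g ^ 3) (h : g * (γ * f + δ) = α * f + β) :
    γ * b₁ = α * b₂ ∧ γ * b₂ = α * b₃ ∧ δ = γ * b₀ + α * b₁ ∧ β = α * b₀ + γ * b₃ * g ^ 4 := by
  have hcubic : (α * b₀ + γ * b₃ * g ^ 4 + β) + (γ * b₀ + α * b₁ + δ) * g +
      (γ * b₁ + α * b₂) * g ^ 2 + (γ * b₂ + α * b₃) * g ^ 3 = 0 := by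
    linear_combination h - (g * γ - α) * hf +
      (α * (b₀ + b₁ * g + b₂ * g ^ 2 + b₃ * g ^ 3) + β) * (CharTwo.two_eq_zero : (2 : K) = 0)
  obtain ⟨h₀, h₁, h₂, h₃⟩ := eq_zero_of_cubic_eq_zero hdeg
    (add_mem (add_mem (mul_mem hα hb₀) (mul_mem (mul_mem hγ hb₃) hg4)) hβ)
    (add_mem (add_mem (mul_mem hγ hb₀) (mul_mem hα hb₁)) hδ)
    (add_mem (mul_mem hγ hb₁) (mul_mem hα hb₂)) (add_mem (mul_mem hγ hb₂) (mul_mem hα hb₃)) hcubic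
  rw [CharTwo.add_eq_zero] at h₀ h₁ h₂ h₃
  exact ⟨h₂, h₃, h₁.symm, h₀.symm⟩

lemma exists_moebius_of_mul_eq (hg4 : g ^ 4 ∈ F) (hb₀ : b₀ ∈ F) (hb₁ : b₁ ∈ F) (hb₃ : b₃ ∈ F)
    (hα : α ∈ F) (hγ : γ ∈ F) (hf : f = b₀ + b₁ * g + b₂ * g ^ 2 + b₃ * g ^ 3)
    (h₂ : γ * b₁ = α * b₂) (h₃ : γ * b₂ = α * b₃) (hdet : α ^ 2 * b₁ + γ ^ 2 * b₃ * g ^ 4 ≠ 0) :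
    ∃ α β γ δ : K, α ∈ F ∧ β ∈ F ∧ γ ∈ F ∧ δ ∈ F ∧
      α * δ + β * γ ≠ 0 ∧ g = (α * f + β) / (γ * f + δ) := by
  have h2 : (2 : K) = 0 := CharTwo.two_eq_zero
  have hrel := mul_moebius_denom_eq hf h₂ h₃
  refine ⟨α, α * b₀ + γ * b₃ * g ^ 4, γ, γ * b₀ + α * b₁, hα,
    add_mem (mul_mem hα hb₀) (mul_mem (mul_mem hγ hb₃) hg4), hγ,
    add_mem (mul_mem hγ hb₀) (mul_mem hα hb₁), ?_, ?_⟩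
  · convert hdet using 1
    linear_combination (α * γ * b₀) * h2
  · have hden : γ * f + (γ * b₀ + α * b₁) ≠ 0 := fun h0 => hdet (by
      linear_combination (α + γ * g) * h0 - γ * hrel - (α * γ * (f + b₀)) * h2)
    rw [eq_div_iff hden]
    exact hrel

lemma exists_moebius_of_sq_eq_mul (hg4 : g ^ 4 ∈ F) (hb₀ : b₀ ∈ F) (hb₁ : b₁ ∈ F) (hb₂ : b₂ ∈ F)
    (hb₃ : b₃ ∈ F) (hf : f = b₀ + b₁ * g + b₂ * g ^ 2 + b₃ * g ^ 3) (hne : b₁ + b₃ * g ^ 2 ≠ 0)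
    (hb : b₂ ^ 2 = b₁ * b₃) :
    ∃ α β γ δ : K, α ∈ F ∧ β ∈ F ∧ γ ∈ F ∧ δ ∈ F ∧
      α * δ + β * γ ≠ 0 ∧ g = (α * f + β) / (γ * f + δ) := by
  by_cases hb₃0 : b₃ = 0
  · have hb₁0 : b₁ ≠ 0 := by simpa [hb₃0] using hne
    refine exists_moebius_of_mul_eq hg4 hb₀ hb₁ hb₃ hb₁ hb₂ hf (mul_comm _ _) (by rw [← sq, hb]) ?_
    simpa [hb₃0, ← pow_succ] using hb₁0
  · refine exists_moebius_of_mul_eq hg4 hb₀ hb₁ hb₃ hb₂ hb₃ hf (by rw [← sq, hb, mul_comm])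
      (mul_comm _ _) ?_
    rw [show b₂ ^ 2 * b₁ + b₃ ^ 2 * b₃ * g ^ 4 = b₃ * (b₁ + b₃ * g ^ 2) ^ 2 by
      linear_combination b₁ * hb - (b₁ * b₃ ^ 2 * g ^ 2) * (CharTwo.two_eq_zero : (2 : K) = 0)]
    exact mul_ne_zero hb₃0 (pow_ne_zero 2 hne)

lemma sq_eq_mul_of_mul_moebius_denom_eq (hg4 : g ^ 4 ∈ F) (hdeg : 4 ≤ (minpoly F g).natDegree)
    (hb₀ : b₀ ∈ F) (hb₁ : b₁ ∈ F) (hb₂ : b₂ ∈ F) (hb₃ : b₃ ∈ F)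
    (hα : α ∈ F) (hβ : β ∈ F) (hγ : γ ∈ F) (hδ : δ ∈ F)
    (hf : f = b₀ + b₁ * g + b₂ * g ^ 2 + b₃ * g ^ 3) (hdet : α * δ + β * γ ≠ 0)
    (h : g * (γ * f + δ) = α * f + β) : b₂ ^ 2 = b₁ * b₃ := by
  obtain ⟨h₂, h₃, rfl, rfl⟩ :=
    moebius_coeffs_of_mul_denom_eq hg4 hdeg hb₀ hb₁ hb₂ hb₃ hα hβ hγ hδ hf h
  have hα0 : α * (b₂ ^ 2 - b₁ * b₃) = 0 := by linear_combination b₁ * h₃ - b₂ * h₂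
  have hγ0 : γ * (b₂ ^ 2 - b₁ * b₃) = 0 := by linear_combination b₂ * h₃ - b₃ * h₂
  by_contra hne
  have hne' := sub_ne_zero.mpr hne
  simp [(mul_eq_zero.mp hα0).resolve_right hne', (mul_eq_zero.mp hγ0).resolve_right hne'] at hdet

end Moebius

end

theorem SY_symbol_eq_zero_iff_sameOrbit_general
    (k K : Type*) [Field k] [CharP k 2] [Field K] [Algebra k K]
    (hfg : (⊤ : IntermediateField k K).FG)
    (htr : ∃ x : K, Transcendental k x ∧
      Algebra.IsAlgebraic (IntermediateField.adjoin k {x}) K)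
    (hdeg : Module.finrank (kSq k K) K = 2)
    (L : Type*) [Field L] (ι : K →+* L)
    (f g : K) (hg : g ∉ kSq k K)
    (s : K) (hs : SYWitness k K L ι f g s) :
    s • (KaehlerDifferential.D k K g : Ω[K⁄k]) = 0 ↔
      ∃ α β γ δ : K, α ∈ kFour k K ∧ β ∈ kFour k K ∧ γ ∈ kFour k K ∧ δ ∈ kFour k K ∧
        α * δ + β * γ ≠ 0 ∧ g = (α * f + β) / (γ * f + δ) := by
  have : CharP K 2 := charP_of_injective_algebraMap (algebraMap k K).injective 2
  obtain ⟨b₀, b₁, b₂, b₃, hb₀, hb₁, hb₂, hb₃, hfb, hne, hs₀⟩ := hs.exists_coeffs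
  rw [smul_D_eq_zero_iff hdeg hg (sq_mem_kSq g), hs₀]
  refine ⟨exists_moebius_of_sq_eq_mul (pow_four_mem_kFour g) hb₀ hb₁ hb₂ hb₃ hfb hne, ?_⟩
  rintro ⟨α, β, γ, δ, hα, hβ, hγ, hδ, hdet, hgf⟩
  have hden : γ * f + δ ≠ 0 := fun h => hg (by rw [hgf, h, div_zero]; exact zero_mem _)
  refine sq_eq_mul_of_mul_moebius_denom_eq (pow_four_mem_kFour g)
    (four_le_natDegree_minpoly_kFour hfg htr hdeg hg) hb₀ hb₁ hb₂ hb₃ hα hβ hγ hδ hfb hdet ?_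
  rw [hgf, div_mul_cancel₀ _ hden]

/-- **Vanishing of the Sugiyama–Yasuda symbol** (Corollary 4.5 / Theorem 4.8(b) of
Kedlaya–Litt–Witaszek): for `f, g ∈ R = K \ k(K²)`, `SY(f, g) = 0` in `Ω[K⁄k]` if
and only if `g = (αf + β)/(γf + δ)` for some `α, β, γ, δ ∈ k(K⁴)` with `αδ + βγ ≠ 0`,
i.e. exactly when `f` and `g` lie in the same orbit under `Γ = PGL₂(k^{1/4}·K)`. -/
theorem SY_symbol_eq_zero_iff_sameOrbit
    (k K : Type*) [Field k] [CharP k 2] [Field K] [Algebra k K]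
    (hfg : (⊤ : IntermediateField k K).FG)
    (htr : ∃ x : K, Transcendental k x ∧
      Algebra.IsAlgebraic (IntermediateField.adjoin k {x}) K)
    (halg : ∀ x : K, IsAlgebraic k x → x ∈ (algebraMap k K).range)
    (hdeg : Module.finrank (kSq k K) K = 2)
    (L : Type*) [Field L] (ι : K →+* L)
    (hLperf : ∀ x : L, ∃ y : L, y ^ 2 = x)
    (hLinsep : ∀ x : L, ∃ n : ℕ, x ^ 2 ^ n ∈ Set.range ι)
    (f g : K) (hf : f ∉ kSq k K) (hg : g ∉ kSq k K)
    (s : K) (hs : SYWitness k K L ι f g s) :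
    s • (KaehlerDifferential.D k K g : Ω[K⁄k]) = 0 ↔
      ∃ α β γ δ : K, α ∈ kFour k K ∧ β ∈ kFour k K ∧ γ ∈ kFour k K ∧ δ ∈ kFour k K ∧
        α * δ + β * γ ≠ 0 ∧ g = (α * f + β) / (γ * f + δ) :=
  SY_symbol_eq_zero_iff_sameOrbit_general k K hfg htr hdeg L ι f g hg s hs
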